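/- arXiv:2106.12435 — 6 statements merged into one kernel-verified Lean document; each statement's English description precedes it below -/
import Mathlib

section
/- Let d be a positive natural number, let ρ_in, ρ_out, s, η ∈ ℝ and u_in, u_out ∈ ℝ^d, and define the dissipative upwind flux of a scalar quantity with traces q_in, q_out by Up(q) = q_out·min(s,0) + q_in·max(s,0) − (η/2)·(q_out − q_in), applied componentwise to vector quantities. Then (1/2)·Up(ρ)·(|u_out|² − |u_in|²) − Up(ρ u) · (u_out − u_in) = (η/2)·((ρ_in + ρ_out)/2)·|u_out − u_in|² + (1/2)·(ρ_in·max(s,0) − ρ_out·min(s,0))·|u_out − u_in|², where ρ u denotes the vector with traces ρ_in·u_in and ρ_out·u_out, · is the Euclidean inner product and |·| the Euclidean norm on ℝ^d. -/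
/-! Both upwind fluxes are weighted sums `a • u_out + b • u_in` with the same weights
`a = ρ_out (min(s,0) - η/2)` and `b = ρ_in (max(s,0) + η/2)` as the scalar flux `a + b`.
For any such weights, polarization turns the left-hand side into `(b - a)/2 · |u_out - u_in|²`,
and `b - a` is exactly the sum of the two dissipation coefficients. -/

theorem half_mul_norm_sq_sub_sub_inner_smul_add_smul {E : Type*} [NormedAddCommGroup E]
    [InnerProductSpace ℝ E] (a b : ℝ) (x y : E) :
    (1 / 2) * (a + b) * (‖y‖ ^ 2 - ‖x‖ ^ 2) - inner ℝ (a • y + b • x) (y - x)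
      = (b - a) / 2 * ‖y - x‖ ^ 2 := by
  simp only [inner_sub_right, inner_add_left, inner_smul_left, real_inner_self_eq_norm_sq,
    norm_sub_sq_real, real_inner_comm x y, RCLike.conj_to_real]
  ring

theorem upwind_kinetic_energy_dissipation_identity_general
    (d : ℕ) (ρin ρout s η : ℝ)
    (uin uout : EuclideanSpace ℝ (Fin d)) :
    (1 / 2) * (ρout * min s 0 + ρin * max s 0 - (η / 2) * (ρout - ρin))
        * (‖uout‖ ^ 2 - ‖uin‖ ^ 2)
      - (inner ℝ (min s 0 • (ρout • uout) + max s 0 • (ρin • uin)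
          - (η / 2) • (ρout • uout - ρin • uin)) (uout - uin) : ℝ)
    = (η / 2) * ((ρin + ρout) / 2) * ‖uout - uin‖ ^ 2
      + (1 / 2) * (ρin * max s 0 - ρout * min s 0) * ‖uout - uin‖ ^ 2 := by
  set a := ρout * (min s 0 - η / 2)
  set b := ρin * (max s 0 + η / 2)
  have hflux : min s 0 • (ρout • uout) + max s 0 • (ρin • uin)
      - (η / 2) • (ρout • uout - ρin • uin) = a • uout + b • uin := by
    module
  rw [hflux]
  linear_combination half_mul_norm_sq_sub_sub_inner_smul_add_smul a b uin uout

/-- The per-face algebraic identity completing the proof of the discrete energy balance: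
the difference between the upwind transport of kinetic energy and the upwind momentum flux
tested with the velocity jump equals a sum of two nonnegative numerical dissipation terms. -/
theorem upwind_kinetic_energy_dissipation_identity
    (d : ℕ) (hd : 0 < d) (ρin ρout s η : ℝ)
    (uin uout : EuclideanSpace ℝ (Fin d)) :
    (1 / 2) * (ρout * min s 0 + ρin * max s 0 - (η / 2) * (ρout - ρin))
        * (‖uout‖ ^ 2 - ‖uin‖ ^ 2)
      - (inner ℝ (min s 0 • (ρout • uout) + max s 0 • (ρin • uin)
          - (η / 2) • (ρout • uout - ρin • uin)) (uout - uin) : ℝ)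
    = (η / 2) * ((ρin + ρout) / 2) * ‖uout - uin‖ ^ 2
      + (1 / 2) * (ρin * max s 0 - ρout * min s 0) * ‖uout - uin‖ ^ 2 :=
  upwind_kinetic_energy_dissipation_identity_general d ρin ρout s η uin uout
end

section
/- Let 0 < c_* < c^* be real numbers. Then there exists a constant C > 0, depending only on c_* and c^*, such that for all real numbers ρ₁, ρ₂ ≥ 0 and all θ₁, θ₂ ∈ [c_*, c^*]: |ρ₂·ln(θ₂) − ρ₁·ln(θ₁)| ≤ C·( |ρ₂ − ρ₁| + |ρ₂·θ₂ − ρ₁·θ₁| ). In fact one may take C = max(|ln c_*|, |ln c^*|) + c^*/c_* + 1/c_*. -/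
lemma log_lip (cs : ℝ) (hcs : 0 < cs) {a b : ℝ} (ha : cs ≤ a) (hb : cs ≤ b) :
    |Real.log b - Real.log a| ≤ |b - a| / cs := by
  have key : ∀ x y : ℝ, cs ≤ x → cs ≤ y → x ≤ y →
      Real.log y - Real.log x ≤ (y - x) / cs := by
    intro x y hx hy hxy
    have hx0 : 0 < x := lt_of_lt_of_le hcs hx
    have hy0 : 0 < y := lt_of_lt_of_le hcs hy
    have heq : Real.log y - Real.log x = Real.log (y / x) := by
      rw [Real.log_div (ne_of_gt hy0) (ne_of_gt hx0)]
    rw [heq]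
    have h1 : Real.log (y / x) ≤ y / x - 1 :=
      Real.log_le_sub_one_of_pos (div_pos hy0 hx0)
    have h2 : y / x - 1 = (y - x) / x := by field_simp
    have h3 : (y - x) / x ≤ (y - x) / cs :=
      div_le_div_of_nonneg_left (by linarith) hcs hx
    linarith
  rcases le_total a b with h | h
  · rw [abs_of_nonneg (by linarith : (0:ℝ) ≤ b - a),
      abs_of_nonneg (sub_nonneg.mpr (Real.log_le_log (lt_of_lt_of_le hcs ha) h))]
    exact key a b ha hb h
  · rw [abs_of_nonpos (by linarith : b - a ≤ 0),
      abs_of_nonpos (sub_nonpos.mpr (Real.log_le_log (lt_of_lt_of_le hcs hb) h))]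
    have := key b a hb ha h
    have hd : -(b - a) / cs = (a - b) / cs := by ring
    linarith [this, hd ▸ this]

/-- The jump estimate `|[ρ ln θ]| ≲ |[ρ]| + |[ρθ]|` used in the consistency analysis of the
entropy inequality, with the explicit constant `C = max(|ln c_*|, |ln c^*|) + c^*/c_* + 1/c_*`. -/
theorem jump_rho_log_theta_estimate
    (cs cS : ℝ) (hcs : 0 < cs) (hlt : cs < cS) :
    ∃ C : ℝ, C = max |Real.log cs| |Real.log cS| + cS / cs + 1 / cs ∧ 0 < C ∧
      ∀ ρ₁ ρ₂ θ₁ θ₂ : ℝ, 0 ≤ ρ₁ → 0 ≤ ρ₂ →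
        θ₁ ∈ Set.Icc cs cS → θ₂ ∈ Set.Icc cs cS →
        |ρ₂ * Real.log θ₂ - ρ₁ * Real.log θ₁| ≤
          C * (|ρ₂ - ρ₁| + |ρ₂ * θ₂ - ρ₁ * θ₁|) := by
  set M := max |Real.log cs| |Real.log cS| with hM
  have hM0 : 0 ≤ M := le_trans (abs_nonneg _) (le_max_left _ _)
  have hC0 : 0 < M + cS / cs + 1 / cs := by
    have h4 : 0 < 1 / cs := by positivity
    have h5 : 0 < cS / cs := div_pos (lt_trans hcs hlt) hcs
    linarith
  refine ⟨M + cS / cs + 1 / cs, rfl, hC0, ?_⟩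
  intro ρ₁ ρ₂ θ₁ θ₂ hρ₁ hρ₂ hθ₁ hθ₂
  obtain ⟨h1l, h1r⟩ := hθ₁
  obtain ⟨h2l, h2r⟩ := hθ₂
  -- bound on |log θ₂|
  have hlogbound : |Real.log θ₂| ≤ M := by
    rw [abs_le]
    constructor
    · have : Real.log cs ≤ Real.log θ₂ :=
        Real.log_le_log hcs h2l
      have : -M ≤ Real.log cs := by
        have := neg_abs_le (Real.log cs)
        have := le_max_left |Real.log cs| |Real.log cS|
        rw [hM]; linarith [neg_abs_le (Real.log cs)]
      linarith [Real.log_le_log hcs h2l]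
    · have h1 : Real.log θ₂ ≤ Real.log cS :=
        Real.log_le_log (lt_of_lt_of_le hcs h2l) h2r
      have h2 : Real.log cS ≤ M := (le_abs_self _).trans (le_max_right _ _)
      linarith
  -- decomposition
  have hdecomp : ρ₂ * Real.log θ₂ - ρ₁ * Real.log θ₁ =
      (ρ₂ - ρ₁) * Real.log θ₂ + ρ₁ * (Real.log θ₂ - Real.log θ₁) := by ring
  have hlip : |Real.log θ₂ - Real.log θ₁| ≤ |θ₂ - θ₁| / cs :=
    log_lip cs hcs h1l h2l
  -- ρ₁ (θ₂ - θ₁) = (ρ₂θ₂ - ρ₁θ₁) - (ρ₂ - ρ₁) θ₂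
  have hθdiff : ρ₁ * |θ₂ - θ₁| ≤ |ρ₂ * θ₂ - ρ₁ * θ₁| + cS * |ρ₂ - ρ₁| := by
    have h : ρ₁ * (θ₂ - θ₁) = (ρ₂ * θ₂ - ρ₁ * θ₁) - (ρ₂ - ρ₁) * θ₂ := by ring
    calc ρ₁ * |θ₂ - θ₁| = |ρ₁ * (θ₂ - θ₁)| := by
          rw [abs_mul, abs_of_nonneg hρ₁]
      _ = |(ρ₂ * θ₂ - ρ₁ * θ₁) - (ρ₂ - ρ₁) * θ₂| := by rw [h]
      _ ≤ |ρ₂ * θ₂ - ρ₁ * θ₁| + |(ρ₂ - ρ₁) * θ₂| := abs_sub _ _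
      _ ≤ |ρ₂ * θ₂ - ρ₁ * θ₁| + cS * |ρ₂ - ρ₁| := by
          rw [abs_mul]
          have : |θ₂| ≤ cS := by
            rw [abs_of_nonneg (le_of_lt (lt_of_lt_of_le hcs h2l))]; exact h2r
          nlinarith [abs_nonneg (ρ₂ - ρ₁)]
  have step : |ρ₂ * Real.log θ₂ - ρ₁ * Real.log θ₁| ≤
      M * |ρ₂ - ρ₁| + ρ₁ * |θ₂ - θ₁| / cs := by
    calc |ρ₂ * Real.log θ₂ - ρ₁ * Real.log θ₁|
        = |(ρ₂ - ρ₁) * Real.log θ₂ + ρ₁ * (Real.log θ₂ - Real.log θ₁)| := by rw [hdecomp]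
      _ ≤ |(ρ₂ - ρ₁) * Real.log θ₂| + |ρ₁ * (Real.log θ₂ - Real.log θ₁)| := abs_add_le _ _
      _ ≤ M * |ρ₂ - ρ₁| + ρ₁ * |θ₂ - θ₁| / cs := by
          rw [abs_mul, abs_mul, abs_of_nonneg hρ₁]
          have hb : ρ₁ * |Real.log θ₂ - Real.log θ₁| ≤ ρ₁ * (|θ₂ - θ₁| / cs) :=
            mul_le_mul_of_nonneg_left hlip hρ₁
          have hc : |ρ₂ - ρ₁| * |Real.log θ₂| ≤ |ρ₂ - ρ₁| * M :=
            mul_le_mul_of_nonneg_left hlogbound (abs_nonneg _)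
          have hd : ρ₁ * (|θ₂ - θ₁| / cs) = ρ₁ * |θ₂ - θ₁| / cs := by ring
          linarith
  set A := |ρ₂ - ρ₁|
  set B := |ρ₂ * θ₂ - ρ₁ * θ₁|
  have hA : 0 ≤ A := abs_nonneg _
  have hB : 0 ≤ B := abs_nonneg _
  have hdiv : ρ₁ * |θ₂ - θ₁| / cs ≤ (B + cS * A) / cs :=
    div_le_div_of_nonneg_right hθdiff hcs.le
  have heq : (B + cS * A) / cs = B * (1 / cs) + (cS / cs) * A := by
    field_simp
  have h1 : 0 ≤ M * B := mul_nonneg hM0 hB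
  have h2 : 0 ≤ (cS / cs) * B := mul_nonneg (div_nonneg (by linarith) hcs.le) hB
  have h3 : 0 ≤ A * (1 / cs) := mul_nonneg hA (one_div_nonneg.mpr hcs.le)
  calc |ρ₂ * Real.log θ₂ - ρ₁ * Real.log θ₁|
      ≤ M * A + ρ₁ * |θ₂ - θ₁| / cs := step
    _ ≤ M * A + (B * (1 / cs) + (cS / cs) * A) := by rw [← heq]; linarith
    _ ≤ (M + cS / cs + 1 / cs) * (A + B) := by
        have hexp : (M + cS / cs + 1 / cs) * (A + B) =
            M * A + M * B + (cS / cs) * A + (cS / cs) * B + A * (1 / cs) + B * (1 / cs) := by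
          ring
        linarith
end

section
/- Let (X, μ) be a measure space, c_* > 0, and let ρ, ρ', θ, θ' : X → ℝ be measurable functions with ρ ≥ 0, ρ' ≥ 0 and θ ≥ c_* almost everywhere. Assume that ρ', |ρ'θ' − ρθ|, |ρ' − ρ| and ρ'·(θ' − θ)² are integrable. Then ∫ |ρ' − ρ| dμ ≤ (1/c_*)·[ ∫ |ρ'θ' − ρθ| dμ + (∫ ρ' dμ)^{1/2} · (∫ ρ'·(θ' − θ)² dμ)^{1/2} ]. -/
/-!
Since `θ ≥ c_*`, pointwise `c_* |ρ' - ρ| ≤ |(ρ' - ρ) θ| ≤ |ρ'θ' - ρθ| + |ρ' (θ' - θ)|`, because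
`(ρ' - ρ) θ = (ρ'θ' - ρθ) - ρ' (θ' - θ)`. Writing `|ρ' (θ' - θ)| = √(ρ' · ρ' (θ' - θ)²)`, its
integral is bounded by Cauchy–Schwarz for the square roots of the two nonnegative integrable
functions `ρ'` and `ρ' (θ' - θ)²`.
-/

open MeasureTheory

theorem mul_abs_sub_le_abs_mul_sub_add_abs_mul_sub {c a b s t : ℝ} (hct : c ≤ t) :
    c * |a - b| ≤ |a * s - b * t| + |a * (s - t)| :=
  calc c * |a - b| ≤ |t| * |a - b| := by gcongr; exact hct.trans (le_abs_self t)
    _ = |(a * s - b * t) - a * (s - t)| := by rw [← abs_mul]; ring_nf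
    _ ≤ |a * s - b * t| + |a * (s - t)| := abs_sub _ _

section SqrtIntegrable

variable {X : Type*} [MeasurableSpace X] {μ : Measure X} {u v : X → ℝ}

theorem MeasureTheory.Integrable.memLp_two_sqrt (hu : Integrable u μ) (hu₀ : 0 ≤ᵐ[μ] u) :
    MemLp (fun x => Real.sqrt (u x)) 2 μ := by
  refine (memLp_two_iff_integrable_sq hu.aemeasurable.sqrt.aestronglyMeasurable).2 ?_
  refine hu.congr ?_
  filter_upwards [hu₀] with x hx
  exact (Real.sq_sqrt hx).symm

theorem sqrt_mul_sqrt_ae_eq_sqrt_mul (hu₀ : 0 ≤ᵐ[μ] u) :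
    (fun x => Real.sqrt (u x) * Real.sqrt (v x)) =ᵐ[μ] fun x => Real.sqrt (u x * v x) := by
  filter_upwards [hu₀] with x hx
  exact (Real.sqrt_mul hx _).symm

theorem MeasureTheory.Integrable.sqrt_mul (hu : Integrable u μ) (hv : Integrable v μ)
    (hu₀ : 0 ≤ᵐ[μ] u) (hv₀ : 0 ≤ᵐ[μ] v) :
    Integrable (fun x => Real.sqrt (u x * v x)) μ :=
  ((hu.memLp_two_sqrt hu₀).integrable_mul (hv.memLp_two_sqrt hv₀)).congr
    (sqrt_mul_sqrt_ae_eq_sqrt_mul hu₀)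

theorem integral_sqrt_mul_le (hu : Integrable u μ) (hv : Integrable v μ)
    (hu₀ : 0 ≤ᵐ[μ] u) (hv₀ : 0 ≤ᵐ[μ] v) :
    ∫ x, Real.sqrt (u x * v x) ∂μ ≤ Real.sqrt (∫ x, u x ∂μ) * Real.sqrt (∫ x, v x ∂μ) := by
  have hsq {w : X → ℝ} (hw₀ : 0 ≤ᵐ[μ] w) : ∫ x, Real.sqrt (w x) ^ (2 : ℝ) ∂μ = ∫ x, w x ∂μ := by
    refine integral_congr_ae ?_
    filter_upwards [hw₀] with x hx
    rw [Real.rpow_two, Real.sq_sqrt hx]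
  have hCS := integral_mul_le_Lp_mul_Lq_of_nonneg Real.HolderConjugate.two_two
    (.of_forall fun x => Real.sqrt_nonneg (u x)) (.of_forall fun x => Real.sqrt_nonneg (v x))
    (by simpa using hu.memLp_two_sqrt hu₀) (by simpa using hv.memLp_two_sqrt hv₀)
  rw [integral_congr_ae (sqrt_mul_sqrt_ae_eq_sqrt_mul hu₀), hsq hu₀, hsq hv₀] at hCS
  simpa only [Real.sqrt_eq_rpow] using hCS

end SqrtIntegrable

theorem density_L1_estimate_general
    {X : Type*} [MeasurableSpace X] (μ : Measure X) (cs : ℝ) (hcs : 0 < cs)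
    (ρ ρ' θ θ' : X → ℝ)
    (hρ' : ∀ᵐ x ∂μ, 0 ≤ ρ' x) (hθ : ∀ᵐ x ∂μ, cs ≤ θ x)
    (h1 : Integrable ρ' μ)
    (h2 : Integrable (fun x => ρ' x * θ' x - ρ x * θ x) μ)
    (h4 : Integrable (fun x => ρ' x * (θ' x - θ x) ^ 2) μ) :
    ∫ x, |ρ' x - ρ x| ∂μ ≤ (1 / cs) *
      ((∫ x, |ρ' x * θ' x - ρ x * θ x| ∂μ) +
        Real.sqrt (∫ x, ρ' x ∂μ) * Real.sqrt (∫ x, ρ' x * (θ' x - θ x) ^ 2 ∂μ)) := by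
  have hsqrt (x : X) :
      Real.sqrt (ρ' x * (ρ' x * (θ' x - θ x) ^ 2)) = |ρ' x * (θ' x - θ x)| := by
    rw [← Real.sqrt_sq_eq_abs]; ring_nf
  have hv₀ : 0 ≤ᵐ[μ] fun x => ρ' x * (θ' x - θ x) ^ 2 := by
    filter_upwards [hρ'] with x hx
    positivity
  have hint : Integrable (fun x => |ρ' x * (θ' x - θ x)|) μ := by
    simpa only [hsqrt] using h1.sqrt_mul h4 hρ' hv₀
  have hCS : ∫ x, |ρ' x * (θ' x - θ x)| ∂μ ≤
      Real.sqrt (∫ x, ρ' x ∂μ) * Real.sqrt (∫ x, ρ' x * (θ' x - θ x) ^ 2 ∂μ) := by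
    simpa only [hsqrt] using integral_sqrt_mul_le h1 h4 hρ' hv₀
  have hpt : ∀ᵐ x ∂μ, |ρ' x - ρ x| ≤
      1 / cs * (|ρ' x * θ' x - ρ x * θ x| + |ρ' x * (θ' x - θ x)|) := by
    filter_upwards [hθ] with x hx
    rw [one_div_mul_eq_div, le_div_iff₀ hcs, mul_comm]
    exact mul_abs_sub_le_abs_mul_sub_add_abs_mul_sub hx
  calc ∫ x, |ρ' x - ρ x| ∂μ
      ≤ ∫ x, 1 / cs * (|ρ' x * θ' x - ρ x * θ x| + |ρ' x * (θ' x - θ x)|) ∂μ :=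
        integral_mono_of_nonneg (.of_forall fun x => abs_nonneg _)
          ((h2.abs.add hint).const_mul _) hpt
    _ = 1 / cs * ((∫ x, |ρ' x * θ' x - ρ x * θ x| ∂μ) + ∫ x, |ρ' x * (θ' x - θ x)| ∂μ) := by
        rw [integral_const_mul, integral_add h2.abs hint]
    _ ≤ _ := by gcongr

/-- First step of the strong-convergence proof: the L¹ distance of densities is controlled
by the L¹ distance of the products ρθ plus a weighted Cauchy–Schwarz term. -/
theorem density_L1_estimate
    {X : Type*} [MeasurableSpace X] (μ : Measure X) (cs : ℝ) (hcs : 0 < cs)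
    (ρ ρ' θ θ' : X → ℝ)
    (hρm : Measurable ρ) (hρ'm : Measurable ρ') (hθm : Measurable θ) (hθ'm : Measurable θ')
    (hρ : ∀ᵐ x ∂μ, 0 ≤ ρ x) (hρ' : ∀ᵐ x ∂μ, 0 ≤ ρ' x) (hθ : ∀ᵐ x ∂μ, cs ≤ θ x)
    (h1 : Integrable ρ' μ)
    (h2 : Integrable (fun x => ρ' x * θ' x - ρ x * θ x) μ)
    (h3 : Integrable (fun x => ρ' x - ρ x) μ)
    (h4 : Integrable (fun x => ρ' x * (θ' x - θ x) ^ 2) μ) :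
    ∫ x, |ρ' x - ρ x| ∂μ ≤ (1 / cs) *
      ((∫ x, |ρ' x * θ' x - ρ x * θ x| ∂μ) +
        Real.sqrt (∫ x, ρ' x ∂μ) * Real.sqrt (∫ x, ρ' x * (θ' x - θ x) ^ 2 ∂μ)) :=
  density_L1_estimate_general μ cs hcs ρ ρ' θ θ' hρ' hθ h1 h2 h4
end

section
/- Let (X, μ) be a measure space, ρ̲ > 0 and M ≥ 0 real numbers, m a positive natural number, and let ρ, ρ', θ, θ' : X → ℝ be measurable functions with ρ ≥ ρ̲ almost everywhere, ρ' ≥ 0, and |θ' − θ| ≤ M almost everywhere. Assume |ρ' − ρ| and ρ'·|θ' − θ|^{2m} are integrable. Then ∫ |θ' − θ|^{2m} dμ ≤ (2/ρ̲)·( M^{2m} · ∫ |ρ' − ρ| dμ + ∫ ρ'·|θ' − θ|^{2m} dμ ). -/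
open MeasureTheory

/-- Second step of the strong-convergence proof: the unweighted L^{2m}-distance of the
potential temperatures is controlled by the L¹ density distance and the ρ'-weighted distance. -/
theorem temperature_L2m_estimate
    {X : Type*} [MeasurableSpace X] (μ : Measure X)
    (ρlb M : ℝ) (hρlb : 0 < ρlb) (hM : 0 ≤ M) (m : ℕ) (hm : 0 < m)
    (ρ ρ' θ θ' : X → ℝ)
    (hρm : Measurable ρ) (hρ'm : Measurable ρ') (hθm : Measurable θ) (hθ'm : Measurable θ')
    (hρ : ∀ᵐ x ∂μ, ρlb ≤ ρ x) (hρ' : ∀ᵐ x ∂μ, 0 ≤ ρ' x)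
    (hθθ' : ∀ᵐ x ∂μ, |θ' x - θ x| ≤ M)
    (h1 : Integrable (fun x => ρ' x - ρ x) μ)
    (h2 : Integrable (fun x => ρ' x * |θ' x - θ x| ^ (2 * m)) μ) :
    ∫ x, |θ' x - θ x| ^ (2 * m) ∂μ ≤
      (2 / ρlb) * (M ^ (2 * m) * ∫ x, |ρ' x - ρ x| ∂μ
        + ∫ x, ρ' x * |θ' x - θ x| ^ (2 * m) ∂μ) := by
  set g : X → ℝ := fun x => (2 / ρlb) * (M ^ (2 * m) * |ρ' x - ρ x|
      + ρ' x * |θ' x - θ x| ^ (2 * m)) with hg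
  have h1' : Integrable (fun x => |ρ' x - ρ x|) μ := h1.abs
  have hgint : Integrable g μ := ((h1'.const_mul _).add h2).const_mul _
  have hpos : (0:ℝ) < 2 / ρlb := by positivity
  -- pointwise bound
  have hbound : ∀ᵐ x ∂μ, |θ' x - θ x| ^ (2 * m) ≤ g x := by
    filter_upwards [hρ, hρ', hθθ'] with x hρx hρ'x hθx
    have habs : 0 ≤ |θ' x - θ x| := abs_nonneg _
    by_cases hc : ρ' x ≤ ρlb / 2
    · -- |ρ' - ρ| ≥ ρlb/2
      have hdiff : ρlb / 2 ≤ |ρ' x - ρ x| := by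
        have : ρlb / 2 ≤ ρ x - ρ' x := by linarith
        calc ρlb / 2 ≤ ρ x - ρ' x := this
          _ ≤ |ρ' x - ρ x| := by rw [abs_sub_comm]; exact le_abs_self _
      have h0 : |θ' x - θ x| ^ (2 * m) ≤ M ^ (2 * m) :=
        pow_le_pow_left₀ habs hθx _
      have h1x : (1:ℝ) ≤ (2 / ρlb) * |ρ' x - ρ x| := by
        rw [div_mul_eq_mul_div, le_div_iff₀ hρlb]
        linarith
      have : |θ' x - θ x| ^ (2 * m) ≤ (2 / ρlb) * (M ^ (2 * m) * |ρ' x - ρ x|) := by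
        calc |θ' x - θ x| ^ (2 * m) ≤ M ^ (2 * m) * 1 := by linarith
          _ ≤ M ^ (2 * m) * ((2 / ρlb) * |ρ' x - ρ x|) := by
              apply mul_le_mul_of_nonneg_left h1x (by positivity)
          _ = (2 / ρlb) * (M ^ (2 * m) * |ρ' x - ρ x|) := by ring
      have hterm : 0 ≤ (2 / ρlb) * (ρ' x * |θ' x - θ x| ^ (2 * m)) := by positivity
      simp only [hg]
      nlinarith
    · push_neg at hc
      have : |θ' x - θ x| ^ (2 * m) ≤ (2 / ρlb) * (ρ' x * |θ' x - θ x| ^ (2 * m)) := by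
        have h1x : (1:ℝ) ≤ (2 / ρlb) * ρ' x := by
          rw [div_mul_eq_mul_div, le_div_iff₀ hρlb]; linarith
        calc |θ' x - θ x| ^ (2 * m) = 1 * |θ' x - θ x| ^ (2 * m) := by ring
          _ ≤ ((2 / ρlb) * ρ' x) * |θ' x - θ x| ^ (2 * m) := by
              apply mul_le_mul_of_nonneg_right h1x (by positivity)
          _ = (2 / ρlb) * (ρ' x * |θ' x - θ x| ^ (2 * m)) := by ring
      have hterm : 0 ≤ (2 / ρlb) * (M ^ (2 * m) * |ρ' x - ρ x|) := by positivity
      simp only [hg]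
      nlinarith
  have hfint : Integrable (fun x => |θ' x - θ x| ^ (2 * m)) μ := by
    apply hgint.mono' (((hθ'm.sub hθm).abs.pow_const _).aestronglyMeasurable)
    filter_upwards [hbound] with x hx
    rwa [Real.norm_eq_abs, abs_of_nonneg (by positivity)]
  calc ∫ x, |θ' x - θ x| ^ (2 * m) ∂μ ≤ ∫ x, g x ∂μ :=
        integral_mono_ae hfint hgint hbound
    _ = (2 / ρlb) * (M ^ (2 * m) * ∫ x, |ρ' x - ρ x| ∂μ
        + ∫ x, ρ' x * |θ' x - θ x| ^ (2 * m) ∂μ) := by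
        simp only [hg]
        rw [MeasureTheory.integral_const_mul, integral_add (h1'.const_mul _) h2, MeasureTheory.integral_const_mul]
end

section
/- Let (X, μ) be a finite measure space, q ∈ [1, 2), ρ̲ > 0, d a positive natural number, and let ρ' : X → ℝ and v : X → ℝ^d be measurable with ρ' ≥ 0. Set A = {x ∈ X : ρ'(x) ≤ ρ̲/2}. Then ∫ |v|^q dμ ≤ μ(A)^{(2−q)/2} · (∫ |v|² dμ)^{q/2} + (2/ρ̲)^{q/2} · μ(X)^{(2−q)/2} · (∫ ρ'·|v|² dμ)^{q/2}. -/
/-!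
Write `‖v‖ ^ q = (‖v‖ ^ 2) ^ (q / 2)`. Hölder's inequality with exponents `2 / q` and
`2 / (2 - q)` bounds `∫ f ^ (q / 2)` by `μ(univ) ^ ((2 - q) / 2) * (∫ f) ^ (q / 2)`; apply it to
`‖v‖ ^ 2` on the small-density set `A`, and off `A` use `‖v‖ ^ 2 ≤ (2 / ρ̲) ρ' ‖v‖ ^ 2` before
applying it to `ρ' ‖v‖ ^ 2` on the whole space.
-/

open MeasureTheory

namespace MeasureTheory

variable {X : Type*} [MeasurableSpace X] {μ : Measure X} {f g : X → ℝ} {r : ℝ}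

theorem Integrable.memLp_rpow (hf : Integrable f μ) (hf0 : 0 ≤ᵐ[μ] f) (hr : 0 < r) :
    MemLp (fun x => f x ^ r) (ENNReal.ofReal r⁻¹) μ := by
  have h := (memLp_one_iff_integrable.2 hf).norm_rpow_div (ENNReal.ofReal r)
  rw [ENNReal.toReal_ofReal hr.le, one_div, ← ENNReal.ofReal_inv_of_pos hr] at h
  refine h.ae_eq ?_
  filter_upwards [hf0] with x hx
  rw [Real.norm_of_nonneg hx]

theorem Integrable.rpow_of_le_one [IsFiniteMeasure μ] (hf : Integrable f μ) (hf0 : 0 ≤ᵐ[μ] f)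
    (hr0 : 0 < r) (hr1 : r ≤ 1) : Integrable (fun x => f x ^ r) μ :=
  (hf.memLp_rpow hf0 hr0).integrable <| by
    rw [← ENNReal.ofReal_one]; exact ENNReal.ofReal_le_ofReal (one_le_inv_iff₀.2 ⟨hr0, hr1⟩)

theorem integral_rpow_le_measureReal_univ_rpow_mul [IsFiniteMeasure μ] (hf : Integrable f μ)
    (hf0 : 0 ≤ᵐ[μ] f) (hr0 : 0 < r) (hr1 : r < 1) :
    ∫ x, f x ^ r ∂μ ≤ μ.real Set.univ ^ (1 - r) * (∫ x, f x ∂μ) ^ r := by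
  have hfr0 : 0 ≤ᵐ[μ] fun x => f x ^ r := by
    filter_upwards [hf0] with x hx using Real.rpow_nonneg hx r
  have holder := integral_mul_le_Lp_mul_Lq_of_nonneg (Real.HolderConjugate.inv_one_sub_inv hr0 hr1)
    hfr0 (ae_of_all _ fun _ => zero_le_one) (hf.memLp_rpow hf0 hr0) (memLp_const 1)
  have hfr_inv : ∫ x, (f x ^ r) ^ r⁻¹ ∂μ = ∫ x, f x ∂μ := by
    refine integral_congr_ae ?_
    filter_upwards [hf0] with x hx
    rw [← Real.rpow_mul hx, mul_inv_cancel₀ hr0.ne', Real.rpow_one]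
  simpa [hfr_inv, mul_comm] using holder

theorem integral_rpow_le_of_le_const_mul_on_compl [IsFiniteMeasure μ] {s : Set X}
    (hs : MeasurableSet s) {c : ℝ} (hc : 0 ≤ c) (hf : Integrable f μ) (hg : Integrable g μ)
    (hf0 : 0 ≤ᵐ[μ] f) (hg0 : 0 ≤ᵐ[μ] g) (hfg : ∀ᵐ x ∂μ, x ∉ s → f x ≤ c * g x)
    (hr0 : 0 < r) (hr1 : r < 1) :
    ∫ x, f x ^ r ∂μ ≤ μ.real s ^ (1 - r) * (∫ x, f x ∂μ) ^ r
      + c ^ r * μ.real Set.univ ^ (1 - r) * (∫ x, g x ∂μ) ^ r := by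
  have hfr := hf.rpow_of_le_one hf0 hr0 hr1.le
  have hgr := hg.rpow_of_le_one hg0 hr0 hr1.le
  have on_s : ∫ x in s, f x ^ r ∂μ ≤ μ.real s ^ (1 - r) * (∫ x, f x ∂μ) ^ r := by
    have holder := integral_rpow_le_measureReal_univ_rpow_mul (hf.restrict (s := s))
      (ae_restrict_of_ae hf0) hr0 hr1
    rw [measureReal_restrict_apply_univ] at holder
    refine holder.trans (mul_le_mul_of_nonneg_left ?_ (by positivity))
    exact Real.rpow_le_rpow (setIntegral_nonneg_of_ae_restrict (ae_restrict_of_ae hf0))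
      (setIntegral_le_integral hf hf0) hr0.le
  have on_compl : ∫ x in sᶜ, f x ^ r ∂μ ≤ c ^ r * ∫ x, g x ^ r ∂μ := by
    rw [← integral_const_mul]
    refine (integral_mono_ae hfr.restrict (hgr.const_mul _).restrict ?_).trans
      (setIntegral_le_integral (hgr.const_mul _) ?_)
    · filter_upwards [ae_restrict_mem hs.compl, ae_restrict_of_ae hfg, ae_restrict_of_ae hf0,
        ae_restrict_of_ae hg0] with x hxs hfgx hfx hgx
      rw [← Real.mul_rpow hc hgx]
      exact Real.rpow_le_rpow hfx (hfgx hxs) hr0.le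
    · filter_upwards [hg0] with x hx using mul_nonneg (by positivity) (Real.rpow_nonneg hx r)
  calc ∫ x, f x ^ r ∂μ = (∫ x in s, f x ^ r ∂μ) + ∫ x in sᶜ, f x ^ r ∂μ :=
        (integral_add_compl hs hfr).symm
    _ ≤ _ := by
      rw [mul_assoc]
      exact add_le_add on_s (on_compl.trans (mul_le_mul_of_nonneg_left
        (integral_rpow_le_measureReal_univ_rpow_mul hg hg0 hr0 hr1) (by positivity)))

end MeasureTheory

theorem velocity_Lq_estimate_general
    {X : Type*} [MeasurableSpace X] (μ : Measure X) [IsFiniteMeasure μ]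
    (q ρlb : ℝ) (hq1 : 1 ≤ q) (hq2 : q < 2) (hρlb : 0 < ρlb)
    (d : ℕ)
    (ρ' : X → ℝ) (v : X → EuclideanSpace ℝ (Fin d))
    (hρ'm : Measurable ρ')
    (hρ' : ∀ᵐ x ∂μ, 0 ≤ ρ' x)
    (hv2 : Integrable (fun x => ‖v x‖ ^ 2) μ)
    (hρv2 : Integrable (fun x => ρ' x * ‖v x‖ ^ 2) μ) :
    ∫ x, ‖v x‖ ^ q ∂μ ≤
      (μ {x | ρ' x ≤ ρlb / 2}).toReal ^ ((2 - q) / 2) * (∫ x, ‖v x‖ ^ 2 ∂μ) ^ (q / 2)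
        + (2 / ρlb) ^ (q / 2) * (μ Set.univ).toReal ^ ((2 - q) / 2) *
          (∫ x, ρ' x * ‖v x‖ ^ 2 ∂μ) ^ (q / 2) := by
  have off_small_density : ∀ x, x ∉ {x | ρ' x ≤ ρlb / 2} →
      ‖v x‖ ^ 2 ≤ 2 / ρlb * (ρ' x * ‖v x‖ ^ 2) := fun x hx => by
    have hx : ρlb / 2 < ρ' x := not_le.mp hx
    have hratio : 1 ≤ 2 / ρlb * ρ' x := by
      rw [div_mul_eq_mul_div, one_le_div hρlb]; linarith
    rw [← mul_assoc]
    exact le_mul_of_one_le_left (by positivity) hratio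
  have key := integral_rpow_le_of_le_const_mul_on_compl (measurableSet_le hρ'm measurable_const)
    (by positivity) hv2 hρv2 (ae_of_all _ fun x => by positivity)
    (by filter_upwards [hρ'] with x hx using by positivity) (ae_of_all _ off_small_density)
    (r := q / 2) (by linarith) (by linarith)
  have norm_rpow : ∀ x, (‖v x‖ ^ 2) ^ (q / 2) = ‖v x‖ ^ q := fun x => by
    rw [← Real.rpow_natCast, ← Real.rpow_mul (norm_nonneg _), Nat.cast_ofNat,
      mul_div_cancel₀ q two_ne_zero]
  rw [show (2 - q) / 2 = 1 - q / 2 by ring]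
  simpa only [norm_rpow, measureReal_def] using key

/-- Fourth step of the strong-convergence proof: Hölder on the small-density set and the
lower density bound off it control the L^q norm of the velocity error. -/
theorem velocity_Lq_estimate
    {X : Type*} [MeasurableSpace X] (μ : Measure X) [IsFiniteMeasure μ]
    (q ρlb : ℝ) (hq1 : 1 ≤ q) (hq2 : q < 2) (hρlb : 0 < ρlb)
    (d : ℕ) (hd : 0 < d)
    (ρ' : X → ℝ) (v : X → EuclideanSpace ℝ (Fin d))
    (hρ'm : Measurable ρ') (hvm : Measurable v)
    (hρ' : ∀ᵐ x ∂μ, 0 ≤ ρ' x)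
    (hv2 : Integrable (fun x => ‖v x‖ ^ 2) μ)
    (hρv2 : Integrable (fun x => ρ' x * ‖v x‖ ^ 2) μ) :
    ∫ x, ‖v x‖ ^ q ∂μ ≤
      (μ {x | ρ' x ≤ ρlb / 2}).toReal ^ ((2 - q) / 2) * (∫ x, ‖v x‖ ^ 2 ∂μ) ^ (q / 2)
        + (2 / ρlb) ^ (q / 2) * (μ Set.univ).toReal ^ ((2 - q) / 2) *
          (∫ x, ρ' x * ‖v x‖ ^ 2 ∂μ) ^ (q / 2) :=
  velocity_Lq_estimate_general μ q ρlb hq1 hq2 hρlb d ρ' v hρ'm hρ' hv2 hρv2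
end

section
/- Let (X, μ) be a finite measure space, γ ∈ [1, ∞), and 0 < c_* < c^*, 0 < ρ̲ ≤ R, S > 0 real numbers. Let ρ, θ : X → ℝ be measurable with ρ̲ ≤ ρ ≤ R and c_* ≤ θ ≤ c^* almost everywhere, and let (ρ_n)ₙ and (θ_n)ₙ be sequences of measurable functions with ρ_n ≥ 0, ∫ ρ_n dμ ≤ S, and c_* ≤ θ_n ≤ c^* almost everywhere for every n. Assume that ‖ρ_n θ_n − ρθ‖_{L^γ(μ)} → 0 and ∫ ρ_n·(θ_n − θ)² dμ → 0 as n → ∞. Then ‖ρ_n − ρ‖_{L^γ(μ)} → 0 and, for every p ∈ [1, ∞), ‖θ_n − θ‖_{L^p(μ)} → 0 as n → ∞. -/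
/-!
By AM-GM, `∫ ρₙ |θₙ - θ| ≤ t⁻¹ ∫ ρₙ (θₙ - θ)² + t S` for every `t > 0`, so `ρₙ (θₙ - θ) → 0`
in `L¹`. Since `(ρₙ - ρ) θ = (ρₙ θₙ - ρ θ) - ρₙ (θₙ - θ)` and `θ ≥ c_*`, this gives `ρₙ → ρ` in
`L¹`; then `ρ̲ |θₙ - θ| ≤ ρₙ |θₙ - θ| + (c^* - c_*) |ρₙ - ρ|` gives `θₙ → θ` in `L¹`, hence in
every `Lᵖ` because `|θₙ - θ| ≤ c^* - c_*`. Finally `(ρₙ - ρ) θₙ = (ρₙ θₙ - ρ θ) + ρ (θ - θₙ)`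
with `θₙ ≥ c_*` and `ρ ≤ R` upgrades `ρₙ → ρ` to `L^γ`.
-/

open MeasureTheory Filter Topology
open scoped ENNReal

theorem abs_sub_le_of_le_abs {a b c d k : ℝ} (hk : 0 < k) (hc : k ≤ |c|) :
    |a - b| ≤ k⁻¹ * |a * d - b * c| + k⁻¹ * |a * (d - c)| := by
  rw [← mul_add, ← div_eq_inv_mul, le_div_iff₀ hk]
  calc |a - b| * k ≤ |a - b| * |c| := mul_le_mul_of_nonneg_left hc (abs_nonneg _)
    _ = |(a * d - b * c) - a * (d - c)| := by rw [← abs_mul]; ring_nf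
    _ ≤ |a * d - b * c| + |a * (d - c)| := abs_sub _ _

theorem abs_sub_le_of_le_abs_of_abs_le {a b c d k K : ℝ} (hk : 0 < k) (hd : k ≤ |d|)
    (hb : |b| ≤ K) : |a - b| ≤ k⁻¹ * |a * d - b * c| + k⁻¹ * K * |d - c| := by
  have h := abs_sub_le_of_le_abs (a := b) (b := a) (c := d) (d := c) hk hd
  rw [abs_sub_comm, abs_sub_comm (b * c), abs_mul, abs_sub_comm c] at h
  rw [mul_assoc]
  exact h.trans (by gcongr)

theorem abs_sub_le_of_le_weight {a b c d k C : ℝ} (hk : 0 < k) (hb : k ≤ b)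
    (hdc : |d - c| ≤ C) : |d - c| ≤ k⁻¹ * |a * (d - c)| + k⁻¹ * C * |a - b| := by
  rw [mul_assoc, ← mul_add, ← div_eq_inv_mul, le_div_iff₀ hk, abs_mul]
  have hba : b ≤ |a| + |a - b| := by
    linarith [le_abs_self a, neg_abs_le (a - b)]
  calc |d - c| * k ≤ |d - c| * (|a| + |a - b|) :=
        mul_le_mul_of_nonneg_left (hb.trans hba) (abs_nonneg _)
    _ = |a| * |d - c| + |d - c| * |a - b| := by ring
    _ ≤ |a| * |d - c| + C * |a - b| := by gcongr

section

variable {α ι E F G : Type*} [MeasurableSpace α] {μ : Measure α} {l : Filter ι}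
  [NormedAddCommGroup E] [NormedAddCommGroup F] [NormedAddCommGroup G]

theorem eLpNorm_le_mul_add_mul_of_ae_norm_le {p : ℝ≥0∞} (hp : 1 ≤ p) {f : α → E} {g : α → F}
    {h : α → G} {a b : ℝ} (hg : AEStronglyMeasurable g μ) (hh : AEStronglyMeasurable h μ)
    (hfgh : ∀ᵐ x ∂μ, ‖f x‖ ≤ a * ‖g x‖ + b * ‖h x‖) :
    eLpNorm f p μ ≤ ‖a‖ₑ * eLpNorm g p μ + ‖b‖ₑ * eLpNorm h p μ := by
  calc eLpNorm f p μ ≤ eLpNorm (fun x => a * ‖g x‖ + b * ‖h x‖) p μ :=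
        eLpNorm_mono_ae_real hfgh
    _ ≤ eLpNorm (fun x => a * ‖g x‖) p μ + eLpNorm (fun x => b * ‖h x‖) p μ :=
        eLpNorm_add_le (hg.norm.const_mul a) (hh.norm.const_mul b) hp
    _ = ‖a‖ₑ * eLpNorm g p μ + ‖b‖ₑ * eLpNorm h p μ := by
        rw [← eLpNorm_norm g, ← eLpNorm_norm h, ← eLpNorm_const_smul, ← eLpNorm_const_smul]
        rfl

theorem tendsto_eLpNorm_zero_of_ae_norm_le {p : ℝ≥0∞} (hp : 1 ≤ p) {f : ι → α → E}
    {g : ι → α → F} {h : ι → α → G} {a b : ℝ} (hg : ∀ i, AEStronglyMeasurable (g i) μ)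
    (hh : ∀ i, AEStronglyMeasurable (h i) μ)
    (hfgh : ∀ i, ∀ᵐ x ∂μ, ‖f i x‖ ≤ a * ‖g i x‖ + b * ‖h i x‖)
    (hg0 : Tendsto (fun i => eLpNorm (g i) p μ) l (𝓝 0))
    (hh0 : Tendsto (fun i => eLpNorm (h i) p μ) l (𝓝 0)) :
    Tendsto (fun i => eLpNorm (f i) p μ) l (𝓝 0) := by
  have hlim : Tendsto (fun i => ‖a‖ₑ * eLpNorm (g i) p μ + ‖b‖ₑ * eLpNorm (h i) p μ) l (𝓝 0) := by
    simpa using (ENNReal.Tendsto.const_mul hg0 (Or.inr enorm_ne_top)).add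
      (ENNReal.Tendsto.const_mul hh0 (Or.inr enorm_ne_top))
  exact tendsto_of_tendsto_of_tendsto_of_le_of_le tendsto_const_nhds hlim (fun _ => zero_le)
    fun i => eLpNorm_le_mul_add_mul_of_ae_norm_le hp (hg i) (hh i) (hfgh i)

theorem tendsto_eLpNorm_zero_of_exponent_le [IsFiniteMeasure μ] {p q : ℝ≥0∞} (hpq : p ≤ q)
    {f : ι → α → E} (hf : ∀ i, AEStronglyMeasurable (f i) μ)
    (h : Tendsto (fun i => eLpNorm (f i) q μ) l (𝓝 0)) :
    Tendsto (fun i => eLpNorm (f i) p μ) l (𝓝 0) := by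
  obtain rfl | hp0 := eq_or_ne p 0
  · simpa using tendsto_const_nhds
  have hexp : 0 ≤ 1 / p.toReal - 1 / q.toReal := by
    obtain rfl | hq := eq_or_ne q ∞
    · simp
    have hp : p ≠ ∞ := ne_top_of_le_ne_top hq hpq
    exact sub_nonneg.2 (one_div_le_one_div_of_le (ENNReal.toReal_pos hp0 hp)
      (ENNReal.toReal_mono hq hpq))
  have hlim := ENNReal.Tendsto.mul_const h
    (Or.inr (ENNReal.rpow_ne_top_of_nonneg hexp (measure_ne_top μ Set.univ)))
  rw [zero_mul] at hlim
  exact tendsto_of_tendsto_of_tendsto_of_le_of_le tendsto_const_nhds hlim (fun _ => zero_le)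
    fun i => eLpNorm_le_eLpNorm_mul_rpow_measure_univ hpq (hf i)

theorem tendsto_eLpNorm_zero_of_tendsto_eLpNorm_one_of_bound {f : ι → α → E} {C : ℝ}
    (hfC : ∀ i, ∀ᵐ x ∂μ, ‖f i x‖ ≤ C) (h : Tendsto (fun i => eLpNorm (f i) 1 μ) l (𝓝 0))
    {p : ℝ} (hp : 1 ≤ p) : Tendsto (fun i => eLpNorm (f i) (ENNReal.ofReal p) μ) l (𝓝 0) := by
  have hp0 : 0 < p := zero_lt_one.trans_le hp
  have hpow : ∀ i, eLpNorm (f i) (ENNReal.ofReal p) μ ^ p ≤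
      ENNReal.ofReal (C ^ (p - 1)) * eLpNorm (f i) 1 μ := by
    intro i
    rw [← one_mul (ENNReal.ofReal p), ← eLpNorm_norm_rpow _ hp0]
    refine eLpNorm_le_mul_eLpNorm_of_ae_le_mul ?_ 1
    filter_upwards [hfC i] with x hx
    rw [Real.norm_of_nonneg (by positivity)]
    calc ‖f i x‖ ^ p = ‖f i x‖ ^ (p - 1) * ‖f i x‖ ^ (1 : ℝ) := by
          rw [← Real.rpow_add' (norm_nonneg _) (by linarith), sub_add_cancel]
      _ ≤ C ^ (p - 1) * ‖f i x‖ := by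
          rw [Real.rpow_one]
          gcongr
  have hlim := ENNReal.Tendsto.const_mul h (Or.inr (ENNReal.ofReal_ne_top (r := C ^ (p - 1))))
  rw [mul_zero] at hlim
  have hpow0 := tendsto_of_tendsto_of_tendsto_of_le_of_le tendsto_const_nhds hlim
    (fun _ => zero_le) hpow
  have hroot := ((ENNReal.continuous_rpow_const (y := p⁻¹)).tendsto 0).comp hpow0
  simpa [Function.comp_def, ENNReal.rpow_rpow_inv hp0.ne',
    ENNReal.zero_rpow_of_pos (inv_pos.2 hp0)] using hroot

theorem tendsto_zero_of_forall_le_div_add_mul {a b : ι → ℝ} {S : ℝ} (ha : ∀ i, 0 ≤ a i)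
    (hb : Tendsto b l (𝓝 0)) (hab : ∀ t > 0, ∀ i, a i ≤ b i / t + t * S) :
    Tendsto a l (𝓝 0) := by
  refine tendsto_order.2 ⟨fun c hc => Eventually.of_forall fun i => hc.trans_le (ha i),
    fun ε hε => ?_⟩
  set t := ε / (2 * (|S| + 1)) with ht_def
  have ht : 0 < t := by positivity
  have htS : t * S < ε / 2 := by
    have : t * (|S| + 1) = ε / 2 := by rw [ht_def]; field_simp
    nlinarith [le_abs_self S]
  have hbt : ∀ᶠ i in l, b i / t < ε / 2 := by
    have := hb.div_const t
    rw [zero_div] at this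
    exact this.eventually (gt_mem_nhds (half_pos hε))
  filter_upwards [hbt] with i hi
  linarith [hab t ht i]

theorem integral_abs_mul_le_div_add_mul {w f : α → ℝ} (hw : ∀ᵐ x ∂μ, 0 ≤ w x)
    (hwi : Integrable w μ) (hwf : Integrable (fun x => w x * f x ^ 2) μ) {t : ℝ} (ht : 0 < t) :
    ∫ x, |w x * f x| ∂μ ≤ (∫ x, w x * f x ^ 2 ∂μ) / t + t * ∫ x, w x ∂μ := by
  rw [← integral_div, ← integral_const_mul, ← integral_add (hwf.div_const t) (hwi.const_mul t)]
  refine integral_mono_of_nonneg (Eventually.of_forall fun x => abs_nonneg _)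
    ((hwf.div_const t).add (hwi.const_mul t)) ?_
  filter_upwards [hw] with x hx
  -- `t |f| ≤ f² + t²` is AM-GM
  have hf : |f x| ≤ f x ^ 2 / t + t := by
    rw [div_add' _ _ _ ht.ne', le_div_iff₀ ht]
    nlinarith [sq_nonneg (|f x| - t), sq_abs (f x), abs_nonneg (f x)]
  calc |w x * f x| = w x * |f x| := by rw [abs_mul, abs_of_nonneg hx]
    _ ≤ w x * (f x ^ 2 / t + t) := mul_le_mul_of_nonneg_left hf hx
    _ = w x * f x ^ 2 / t + t * w x := by ring

theorem tendsto_eLpNorm_one_mul_of_tendsto_integral_mul_sq {w f : ι → α → ℝ}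
    {C S : ℝ} (hw : ∀ i, ∀ᵐ x ∂μ, 0 ≤ w i x) (hwi : ∀ i, Integrable (w i) μ)
    (hwS : ∀ i, ∫ x, w i x ∂μ ≤ S) (hf : ∀ i, AEStronglyMeasurable (f i) μ)
    (hfC : ∀ i, ∀ᵐ x ∂μ, |f i x| ≤ C)
    (h : Tendsto (fun i => ∫ x, w i x * f i x ^ 2 ∂μ) l (𝓝 0)) :
    Tendsto (fun i => eLpNorm (fun x => w i x * f i x) 1 μ) l (𝓝 0) := by
  have hwf : ∀ i, Integrable (fun x => w i x * f i x) μ := fun i =>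
    (hwi i).mul_bdd (hf i) (by simpa only [Real.norm_eq_abs] using hfC i)
  have hwf2 : ∀ i, Integrable (fun x => w i x * f i x ^ 2) μ := fun i =>
    (hwi i).mul_bdd ((hf i).pow 2) (c := C ^ 2) <| by
      filter_upwards [hfC i] with x hx
      rw [Real.norm_eq_abs, abs_pow]
      exact pow_le_pow_left₀ (abs_nonneg _) hx 2
  have hint : Tendsto (fun i => ∫ x, |w i x * f i x| ∂μ) l (𝓝 0) :=
    tendsto_zero_of_forall_le_div_add_mul (fun i => integral_nonneg fun x => abs_nonneg _) h
      fun t ht i => (integral_abs_mul_le_div_add_mul (hw i) (hwi i) (hwf2 i) ht).trans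
        (by gcongr; exact hwS i)
  have hofReal := ENNReal.tendsto_ofReal hint
  rw [ENNReal.ofReal_zero] at hofReal
  refine hofReal.congr fun i => ?_
  rw [eLpNorm_one_eq_lintegral_enorm, ← ofReal_integral_norm_eq_lintegral_enorm (hwf i)]
  simp only [Real.norm_eq_abs]

end

theorem strong_convergence_density_temperature_general
    {X : Type*} [MeasurableSpace X] (μ : Measure X) [IsFiniteMeasure μ]
    (γ cs cS ρlb R S : ℝ)
    (hγ : 1 ≤ γ) (hcs : 0 < cs) (hρlb : 0 < ρlb)
    (ρ θ : X → ℝ) (ρn θn : ℕ → X → ℝ)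
    (hρm : Measurable ρ) (hθm : Measurable θ)
    (hρnm : ∀ n, Measurable (ρn n)) (hθnm : ∀ n, Measurable (θn n))
    (hρ : ∀ᵐ x ∂μ, ρlb ≤ ρ x ∧ ρ x ≤ R)
    (hθ : ∀ᵐ x ∂μ, cs ≤ θ x ∧ θ x ≤ cS)
    (hρn : ∀ n, ∀ᵐ x ∂μ, 0 ≤ ρn n x)
    (hρnint : ∀ n, Integrable (ρn n) μ)
    (hρnS : ∀ n, ∫ x, ρn n x ∂μ ≤ S)
    (hθn : ∀ n, ∀ᵐ x ∂μ, cs ≤ θn n x ∧ θn n x ≤ cS)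
    (h1 : Tendsto (fun n =>
        eLpNorm (fun x => ρn n x * θn n x - ρ x * θ x) (ENNReal.ofReal γ) μ) atTop (nhds 0))
    (h2 : Tendsto (fun n => ∫ x, ρn n x * (θn n x - θ x) ^ 2 ∂μ) atTop (nhds 0)) :
    Tendsto (fun n => eLpNorm (fun x => ρn n x - ρ x) (ENNReal.ofReal γ) μ) atTop (nhds 0) ∧
    ∀ p : ℝ, 1 ≤ p →
      Tendsto (fun n => eLpNorm (fun x => θn n x - θ x) (ENNReal.ofReal p) μ)
        atTop (nhds 0) := by
  have hγ1 : 1 ≤ ENNReal.ofReal γ := ENNReal.one_le_ofReal.2 hγ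
  have hδ : ∀ n, ∀ᵐ x ∂μ, |θn n x - θ x| ≤ cS - cs := fun n => by
    filter_upwards [hθ, hθn n] with x hx hxn
    exact abs_sub_le_iff.2 ⟨by linarith, by linarith⟩
  have hρnδ := tendsto_eLpNorm_one_mul_of_tendsto_integral_mul_sq hρn hρnint hρnS
    (fun n => by fun_prop) hδ h2
  have hprod1 := tendsto_eLpNorm_zero_of_exponent_le hγ1 (fun n => by fun_prop) h1
  have hρ1 : Tendsto (fun n => eLpNorm (fun x => ρn n x - ρ x) 1 μ) atTop (𝓝 0) :=
    tendsto_eLpNorm_zero_of_ae_norm_le le_rfl (fun n => by fun_prop) (fun n => by fun_prop)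
      (fun n => by
        filter_upwards [hθ] with x hx
        simpa only [Real.norm_eq_abs] using abs_sub_le_of_le_abs hcs (hx.1.trans (le_abs_self _)))
      hprod1 hρnδ
  have hθ1 : Tendsto (fun n => eLpNorm (fun x => θn n x - θ x) 1 μ) atTop (𝓝 0) :=
    tendsto_eLpNorm_zero_of_ae_norm_le le_rfl (fun n => by fun_prop) (fun n => by fun_prop)
      (fun n => by
        filter_upwards [hρ, hδ n] with x hx hxδ
        simpa only [Real.norm_eq_abs] using abs_sub_le_of_le_weight hρlb hx.1 hxδ)
      hρnδ hρ1
  have hθp (p : ℝ) (hp : 1 ≤ p) :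
      Tendsto (fun n => eLpNorm (fun x => θn n x - θ x) (ENNReal.ofReal p) μ) atTop (𝓝 0) :=
    tendsto_eLpNorm_zero_of_tendsto_eLpNorm_one_of_bound
      (fun n => by simpa only [Real.norm_eq_abs] using hδ n) hθ1 hp
  refine ⟨tendsto_eLpNorm_zero_of_ae_norm_le (a := cs⁻¹) (b := cs⁻¹ * R) hγ1
    (fun n => by fun_prop) (fun n => by fun_prop) (fun n => ?_) h1 (hθp γ hγ), hθp⟩
  filter_upwards [hρ, hθn n] with x hx hxn
  have hρR : |ρ x| ≤ R := abs_le.2 ⟨by linarith [hx.1], hx.2⟩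
  simpa only [Real.norm_eq_abs] using
    abs_sub_le_of_le_abs_of_abs_le (c := θ x) hcs (hxn.1.trans (le_abs_self _)) hρR

/-- Abstract measure-theoretic core of the strong-convergence theorem: convergence of
`ρ_n θ_n` in L^γ and vanishing of the weighted temperature error upgrade to strong
convergence `ρ_n → ρ` in L^γ and `θ_n → θ` in every L^p, p < ∞. -/
theorem strong_convergence_density_temperature
    {X : Type*} [MeasurableSpace X] (μ : Measure X) [IsFiniteMeasure μ]
    (γ cs cS ρlb R S : ℝ)
    (hγ : 1 ≤ γ) (hcs : 0 < cs) (hcc : cs < cS) (hρlb : 0 < ρlb) (hρR : ρlb ≤ R) (hS : 0 < S)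
    (ρ θ : X → ℝ) (ρn θn : ℕ → X → ℝ)
    (hρm : Measurable ρ) (hθm : Measurable θ)
    (hρnm : ∀ n, Measurable (ρn n)) (hθnm : ∀ n, Measurable (θn n))
    (hρ : ∀ᵐ x ∂μ, ρlb ≤ ρ x ∧ ρ x ≤ R)
    (hθ : ∀ᵐ x ∂μ, cs ≤ θ x ∧ θ x ≤ cS)
    (hρn : ∀ n, ∀ᵐ x ∂μ, 0 ≤ ρn n x)
    (hρnint : ∀ n, Integrable (ρn n) μ)
    (hρnS : ∀ n, ∫ x, ρn n x ∂μ ≤ S)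
    (hθn : ∀ n, ∀ᵐ x ∂μ, cs ≤ θn n x ∧ θn n x ≤ cS)
    (h1 : Tendsto (fun n =>
        eLpNorm (fun x => ρn n x * θn n x - ρ x * θ x) (ENNReal.ofReal γ) μ) atTop (nhds 0))
    (h2 : Tendsto (fun n => ∫ x, ρn n x * (θn n x - θ x) ^ 2 ∂μ) atTop (nhds 0)) :
    Tendsto (fun n => eLpNorm (fun x => ρn n x - ρ x) (ENNReal.ofReal γ) μ) atTop (nhds 0) ∧
    ∀ p : ℝ, 1 ≤ p →
      Tendsto (fun n => eLpNorm (fun x => θn n x - θ x) (ENNReal.ofReal p) μ)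
        atTop (nhds 0) :=
  strong_convergence_density_temperature_general μ γ cs cS ρlb R S hγ hcs hρlb ρ θ ρn θn hρm hθm
    hρnm hθnm hρ hθ hρn hρnint hρnS hθn h1 h2
end
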